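/- arXiv:1605.02728 — 2 statements merged into one kernel-verified Lean document; each statement's English description precedes it below -/
import Mathlib

section
/- For 0 < q < 1 and all complex w, A_q(w) = (-wq^{3/2};q)_∞ ∑_{n=0}^∞ q^{n(3n+1)/4}(-w)^n / ((q^{1/2};q^{1/2})_n (-wq^{3/2};q)_n), provided the denominators are nonzero. -/
noncomputable def qpC (q a : ℂ) (n : ℕ) : ℂ := ∏ k ∈ Finset.range n, (1 - a * q ^ k)

noncomputable def qpiC (q a : ℂ) : ℂ := ∏' k : ℕ, (1 - a * q ^ k)

noncomputable def Aq (q : ℝ) (z : ℂ) : ℂ :=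
  ∑' k : ℕ, (q : ℂ) ^ (k ^ 2) * (-z) ^ k / qpC (q : ℂ) (q : ℂ) k

/-!
Write `p = √q` and `A = -w q p`. Since `(A;q)_∞ / (A;q)_n = (A qⁿ;q)_∞`, Euler's expansion
`(c;q)_∞ = ∑ⱼ (-1)ʲ q^(j choose 2) cʲ / (q;q)ⱼ` turns the right-hand side into a double series
over `(n, j)`, which converges absolutely thanks to the factor `p^((n+j)²)`. Collecting the terms
with `n + j = k`, the coefficient of `(-w)ᵏ q^(k²) / (q;q)ₖ` becomes the finite identity
`∑_{n+j=k} (-1)ⁿ p^(n choose 2) / (p;p)ₙ · pʲ / (p²;p²)ⱼ = (-1)ᵏ p^(2 (k choose 2)) / (p²;p²)ₖ`.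
This is the coefficient form of `(t;p)_∞ · 1/(tp;p²)_∞ = (t;p²)_∞`, which follows from splitting
`(t;p)_∞` into even and odd factors and from Euler's second formula
`1/(c;q)_∞ = ∑ⱼ cʲ / (q;q)ⱼ`; the coefficients are read off by uniqueness of power series.
Both Euler formulas come from iterating `F(c) = (1 - c) F(cq)` and letting `c qᵐ → 0`.
-/

open Filter Topology Finset

section Binomial

lemma choose_two_succ (n : ℕ) : (n + 1).choose 2 = n.choose 2 + n := by
  rw [Nat.choose_succ_succ, Nat.choose_one_right, add_comm]

lemma two_mul_choose_two_add (n : ℕ) : 2 * n.choose 2 + n = n ^ 2 := by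
  induction n with
  | zero => rfl
  | succ n ih => rw [choose_two_succ]; linarith

lemma mul_three_mul_add_one_div_two (n : ℕ) : n * (3 * n + 1) / 2 = n ^ 2 + n + n.choose 2 :=
  Nat.div_eq_of_eq_mul_left two_pos (by linarith [two_mul_choose_two_add n])

end Binomial

section Series

lemma summable_of_norm_succ_le_mul {E : Type*} [NormedAddCommGroup E] [CompleteSpace E]
    {f : ℕ → E} {u : ℕ → ℝ} {L : ℝ} (hL : L < 1) (hu : Tendsto u atTop (𝓝 L))
    (h : ∀ n, ‖f (n + 1)‖ ≤ u n * ‖f n‖) : Summable f := by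
  obtain ⟨r, hLr, hr1⟩ := exists_between hL
  refine summable_of_ratio_norm_eventually_le hr1 ?_
  filter_upwards [hu.eventually_lt_const hLr] with n hn
  exact (h n).trans (mul_le_mul_of_nonneg_right hn.le (norm_nonneg _))

lemma summable_pow_mul_pow_choose_two (R : ℝ) {r : ℝ} (hr0 : 0 ≤ r) (hr1 : r < 1) :
    Summable fun n : ℕ => R ^ n * r ^ n.choose 2 := by
  refine summable_of_norm_succ_le_mul zero_lt_one (u := fun n => |R| * r ^ n) ?_ fun n => ?_
  · simpa using (tendsto_pow_atTop_nhds_zero_of_lt_one hr0 hr1).const_mul |R|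
  · simp only [choose_two_succ, Real.norm_eq_abs, abs_mul, abs_pow, abs_of_nonneg hr0, pow_succ,
      pow_add]
    exact le_of_eq (by ring)

lemma Summable.tsum_eq_tsum_sum_antidiagonal {α A : Type*} [AddCommMonoid α] [TopologicalSpace α]
    [ContinuousAdd α] [T3Space α] [AddCommMonoid A] [HasAntidiagonal A] {f : A × A → α}
    (hf : Summable f) : ∑' x, f x = ∑' n, ∑ x ∈ antidiagonal n, f x := by
  have hs : Summable (f ∘ HasAntidiagonal.sigmaAntidiagonalEquivProd) :=
    (Equiv.summable_iff _).mpr hf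
  rw [← HasAntidiagonal.sigmaAntidiagonalEquivProd.tsum_eq f]
  exact (hs.tsum_sigma' fun n => (hasSum_fintype _).summable).trans
    (tsum_congr fun n => by rw [tsum_fintype]; exact sum_coe_sort _ f)

lemma norm_sum_antidiagonal_mul_le {a b : ℕ → ℂ} {C : ℝ} (ha : ∀ n, ‖a n‖ ≤ C ^ n)
    (hb : ∀ n, ‖b n‖ ≤ C ^ n) (k : ℕ) :
    ‖∑ x ∈ antidiagonal k, a x.1 * b x.2‖ ≤ (2 * C) ^ k := by
  have hC : 0 ≤ C := by simpa using (norm_nonneg _).trans (ha 1)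
  calc ‖∑ x ∈ antidiagonal k, a x.1 * b x.2‖ ≤ ∑ x ∈ antidiagonal k, C ^ k := by
        refine (norm_sum_le _ _).trans (sum_le_sum fun x hx => ?_)
        rw [norm_mul, ← mem_antidiagonal.mp hx, pow_add]
        exact mul_le_mul (ha _) (hb _) (norm_nonneg _) (by positivity)
    _ = (k + 1) * C ^ k := by simp
    _ ≤ 2 ^ k * C ^ k := by gcongr; exact_mod_cast Nat.lt_two_pow_self
    _ = (2 * C) ^ k := (mul_pow _ _ _).symm

end Series

section PowerSeries

variable {a b : ℕ → ℂ} {C : ℝ}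

lemma hasFPowerSeriesAt_tsum_mul_pow (ha : ∀ n, ‖a n‖ ≤ C ^ n) :
    HasFPowerSeriesAt (fun z => ∑' n, a n * z ^ n) (FormalMultilinearSeries.ofScalars ℂ a) 0 := by
  have hC : 0 ≤ C := by simpa using (norm_nonneg _).trans (ha 1)
  set r : NNReal := ⟨(C + 1)⁻¹, by positivity⟩
  have hrad : 0 < (FormalMultilinearSeries.ofScalars ℂ a).radius := by
    refine lt_of_lt_of_le ?_ ((FormalMultilinearSeries.ofScalars ℂ a).le_radius_of_bound 1
      (r := r) fun n => ?_)
    · exact ENNReal.coe_pos.mpr (NNReal.coe_pos.mp (show (0 : ℝ) < (C + 1)⁻¹ by positivity))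
    · change ‖_‖ * ((C + 1)⁻¹) ^ n ≤ 1
      rw [FormalMultilinearSeries.ofScalars_norm, inv_pow, ← div_eq_mul_inv,
        div_le_one (by positivity)]
      exact (ha n).trans (pow_le_pow_left₀ hC (by linarith) n)
  have hsum : (fun z => ∑' n, a n * z ^ n) = FormalMultilinearSeries.ofScalarsSum a := by
    simp [FormalMultilinearSeries.ofScalarsSum_eq_tsum]
  rw [hsum]
  exact ((FormalMultilinearSeries.ofScalars ℂ a).hasFPowerSeriesOnBall hrad).hasFPowerSeriesAt

lemma tendsto_tsum_mul_pow_nhds_zero (ha : ∀ n, ‖a n‖ ≤ C ^ n) :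
    Tendsto (fun z => ∑' n, a n * z ^ n) (𝓝 0) (𝓝 (a 0)) := by
  have h0 : ∑' n, a n * (0 : ℂ) ^ n = a 0 := by
    rw [tsum_eq_single 0 fun n hn => by simp [hn]]
    simp
  simpa [h0] using (hasFPowerSeriesAt_tsum_mul_pow ha).continuousAt.tendsto

lemma eq_of_tsum_mul_pow_eventuallyEq {C' : ℝ} (ha : ∀ n, ‖a n‖ ≤ C ^ n)
    (hb : ∀ n, ‖b n‖ ≤ C' ^ n)
    (h : (fun z => ∑' n, a n * z ^ n) =ᶠ[𝓝 0] fun z => ∑' n, b n * z ^ n) : a = b :=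
  FormalMultilinearSeries.ofScalars_series_injective ℂ ℂ
    ((hasFPowerSeriesAt_tsum_mul_pow ha).eq_formalMultilinearSeries_of_eventually
      (hasFPowerSeriesAt_tsum_mul_pow hb) h)

lemma tsum_mul_pow_sub_tsum_mul_pow_mul {c q : ℂ}
    (h₁ : Summable fun j => a j * c ^ j) (h₂ : Summable fun j => a j * (c * q) ^ j) :
    ∑' j, a j * c ^ j - ∑' j, a j * (c * q) ^ j =
      ∑' j, a (j + 1) * (1 - q ^ (j + 1)) * c ^ (j + 1) := by
  rw [← h₁.tsum_sub h₂, (h₁.sub h₂).tsum_eq_zero_add]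
  simp only [pow_zero, mul_one, sub_self, zero_add]
  exact tsum_congr fun j => by ring

end PowerSeries

section Pochhammer

lemma qpC_zero (q a : ℂ) : qpC q a 0 = 1 := prod_range_zero _

lemma qpC_succ (q a : ℂ) (n : ℕ) : qpC q a (n + 1) = qpC q a n * (1 - a * q ^ n) :=
  prod_range_succ _ _

lemma qpC_add (q a : ℂ) (m n : ℕ) : qpC q a (m + n) = qpC q a m * qpC q (a * q ^ m) n := by
  simp only [qpC, prod_range_add, pow_add, mul_assoc]

lemma qpC_two_mul (q a : ℂ) (n : ℕ) :
    qpC q a (2 * n) = qpC (q ^ 2) a n * qpC (q ^ 2) (a * q) n := by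
  induction n with
  | zero => simp [qpC_zero]
  | succ n ih =>
    rw [show 2 * (n + 1) = 2 * n + 1 + 1 by ring, qpC_succ, qpC_succ, qpC_succ, qpC_succ, ih]
    ring

end Pochhammer

section Convergence

variable {q : ℂ}

lemma one_sub_norm_pow_le_norm_one_sub_pow (q : ℂ) (k : ℕ) : 1 - ‖q‖ ^ k ≤ ‖1 - q ^ k‖ := by
  simpa using norm_sub_norm_le (1 : ℂ) (q ^ k)

lemma one_sub_pow_ne_zero (hq : ‖q‖ < 1) {k : ℕ} (hk : k ≠ 0) : 1 - q ^ k ≠ 0 := by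
  refine norm_pos_iff.mp (lt_of_lt_of_le ?_ (one_sub_norm_pow_le_norm_one_sub_pow q k))
  exact sub_pos.mpr (pow_lt_one₀ (norm_nonneg q) hq hk)

lemma pow_one_sub_norm_le_norm_qpC (hq : ‖q‖ < 1) (n : ℕ) :
    (1 - ‖q‖) ^ n ≤ ‖qpC q q n‖ := by
  rw [qpC, norm_prod, pow_eq_prod_const]
  refine prod_le_prod (fun _ _ => sub_nonneg.mpr hq.le) fun k _ => ?_
  rw [← pow_succ']
  refine le_trans ?_ (one_sub_norm_pow_le_norm_one_sub_pow q (k + 1))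
  gcongr
  exact pow_le_of_le_one (norm_nonneg q) hq.le k.succ_ne_zero

lemma qpC_self_ne_zero (hq : ‖q‖ < 1) (n : ℕ) : qpC q q n ≠ 0 :=
  norm_pos_iff.mp ((pow_pos (by linarith) n).trans_le (pow_one_sub_norm_le_norm_qpC hq n))

lemma norm_inv_qpC_le (hq : ‖q‖ < 1) (n : ℕ) : ‖(qpC q q n)⁻¹‖ ≤ (1 - ‖q‖)⁻¹ ^ n := by
  rw [norm_inv, inv_pow]
  exact inv_anti₀ (pow_pos (by linarith) n) (pow_one_sub_norm_le_norm_qpC hq n)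

lemma norm_pow_two_lt_one (hq : ‖q‖ < 1) : ‖q ^ 2‖ < 1 := by
  rw [norm_pow]; exact pow_lt_one₀ (norm_nonneg q) hq two_ne_zero

lemma norm_mul_pow_le (hq : ‖q‖ < 1) (c : ℂ) (m : ℕ) : ‖c * q ^ m‖ ≤ ‖c‖ := by
  rw [norm_mul, norm_pow]
  exact mul_le_of_le_one_right (norm_nonneg c) (pow_le_one₀ (norm_nonneg q) hq.le)

lemma multipliable_one_sub_mul_pow (hq : ‖q‖ < 1) (a : ℂ) :
    Multipliable fun k : ℕ => 1 - a * q ^ k := by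
  have h : Summable fun k : ℕ => ‖-(a * q ^ k)‖ := by
    simpa [norm_mul, norm_pow] using
      (summable_geometric_of_lt_one (norm_nonneg q) hq).mul_left ‖a‖
  simpa [sub_eq_add_neg] using multipliable_one_add_of_summable h

lemma tendsto_qpC (hq : ‖q‖ < 1) (a : ℂ) : Tendsto (qpC q a) atTop (𝓝 (qpiC q a)) :=
  (multipliable_one_sub_mul_pow hq a).hasProd.tendsto_prod_nat

lemma qpiC_eq_qpC_mul (hq : ‖q‖ < 1) (a : ℂ) (n : ℕ) :
    qpiC q a = qpC q a n * qpiC q (a * q ^ n) := by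
  have h := (tendsto_qpC hq a).comp (tendsto_add_atTop_nat n)
  simp only [Function.comp_def, fun m => add_comm m n, qpC_add] at h
  exact tendsto_nhds_unique h ((tendsto_qpC hq _).const_mul _)

lemma qpiC_eq_qpiC_sq_mul (hq : ‖q‖ < 1) (a : ℂ) :
    qpiC q a = qpiC (q ^ 2) a * qpiC (q ^ 2) (a * q) := by
  have hq2 := norm_pow_two_lt_one hq
  have h := (tendsto_qpC hq a).comp (tendsto_id.const_mul_atTop' two_pos)
  simp only [Function.comp_def, id, qpC_two_mul] at h
  exact tendsto_nhds_unique h ((tendsto_qpC hq2 a).mul (tendsto_qpC hq2 _))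

end Convergence

section Euler

variable {q : ℂ}

lemma tendsto_mul_pow_nhds_zero (hq : ‖q‖ < 1) (c : ℂ) :
    Tendsto (fun m : ℕ => c * q ^ m) atTop (𝓝 0) := by
  simpa using (tendsto_pow_atTop_nhds_zero_of_norm_lt_one hq).const_mul c

noncomputable def eulerCoeff (q : ℂ) (j : ℕ) : ℂ := (-1) ^ j * q ^ j.choose 2 / qpC q q j

lemma eulerCoeff_zero (q : ℂ) : eulerCoeff q 0 = 1 := by simp [eulerCoeff, qpC_zero]

lemma eulerCoeff_succ_mul (hq : ‖q‖ < 1) (j : ℕ) :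
    eulerCoeff q (j + 1) * (1 - q ^ (j + 1)) = -q ^ j * eulerCoeff q j := by
  have h₁ := qpC_self_ne_zero hq j
  have h₂ := one_sub_pow_ne_zero hq j.succ_ne_zero
  rw [eulerCoeff, eulerCoeff, qpC_succ, choose_two_succ, ← pow_succ']
  field_simp
  ring

lemma norm_eulerCoeff_le (hq : ‖q‖ < 1) (j : ℕ) :
    ‖eulerCoeff q j‖ ≤ ‖q‖ ^ j.choose 2 * (1 - ‖q‖)⁻¹ ^ j := by
  rw [eulerCoeff, div_eq_mul_inv, norm_mul, norm_mul, norm_pow, norm_pow, norm_neg, norm_one,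
    one_pow, one_mul]
  exact mul_le_mul_of_nonneg_left (norm_inv_qpC_le hq j) (by positivity)

lemma norm_eulerCoeff_le_pow (hq : ‖q‖ < 1) (j : ℕ) : ‖eulerCoeff q j‖ ≤ (1 - ‖q‖)⁻¹ ^ j :=
  (norm_eulerCoeff_le hq j).trans
    (mul_le_of_le_one_left (by positivity) (pow_le_one₀ (norm_nonneg q) hq.le))

lemma summable_eulerCoeff_mul_pow (hq : ‖q‖ < 1) (c : ℂ) :
    Summable fun j => eulerCoeff q j * c ^ j := by
  refine (summable_pow_mul_pow_choose_two ((1 - ‖q‖)⁻¹ * ‖c‖) (norm_nonneg q) hq).of_norm_bounded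
    fun j => ?_
  rw [norm_mul, norm_pow, mul_pow]
  calc ‖eulerCoeff q j‖ * ‖c‖ ^ j ≤ ‖q‖ ^ j.choose 2 * (1 - ‖q‖)⁻¹ ^ j * ‖c‖ ^ j := by
        gcongr; exact norm_eulerCoeff_le hq j
    _ = _ := by ring

lemma tsum_eulerCoeff_mul_pow_eq (hq : ‖q‖ < 1) (c : ℂ) :
    ∑' j, eulerCoeff q j * c ^ j = (1 - c) * ∑' j, eulerCoeff q j * (c * q) ^ j := by
  have h := tsum_mul_pow_sub_tsum_mul_pow_mul (summable_eulerCoeff_mul_pow hq c)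
    (summable_eulerCoeff_mul_pow hq (c * q))
  have hshift : ∑' j, -q ^ j * eulerCoeff q j * c ^ (j + 1) =
      -c * ∑' j, eulerCoeff q j * (c * q) ^ j := by
    rw [← tsum_mul_left]
    exact tsum_congr fun j => by ring
  simp only [eulerCoeff_succ_mul hq, hshift] at h
  linear_combination h

theorem qpiC_eq_tsum_eulerCoeff_mul_pow (hq : ‖q‖ < 1) (c : ℂ) :
    qpiC q c = ∑' j, eulerCoeff q j * c ^ j := by
  have hF : ∀ m, qpC q c m * ∑' j, eulerCoeff q j * (c * q ^ m) ^ j =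
      ∑' j, eulerCoeff q j * c ^ j := by
    intro m
    induction m with
    | zero => simp [qpC_zero]
    | succ m ih =>
      rw [← ih, tsum_eulerCoeff_mul_pow_eq hq (c * q ^ m), qpC_succ, pow_succ, mul_assoc c]
      ring
  have hlim : Tendsto (fun m => qpC q c m * ∑' j, eulerCoeff q j * (c * q ^ m) ^ j) atTop
      (𝓝 (qpiC q c * 1)) := by
    refine (tendsto_qpC hq c).mul ?_
    simpa [Function.comp_def, eulerCoeff_zero] using (tendsto_tsum_mul_pow_nhds_zero
      (norm_eulerCoeff_le_pow hq)).comp (tendsto_mul_pow_nhds_zero hq c)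
  simp only [hF] at hlim
  simpa using tendsto_nhds_unique hlim tendsto_const_nhds

lemma inv_qpC_succ (q : ℂ) (j : ℕ) :
    (qpC q q (j + 1))⁻¹ = (qpC q q j)⁻¹ * (1 - q ^ (j + 1))⁻¹ := by
  rw [qpC_succ, mul_inv, ← pow_succ']

lemma inv_qpC_succ_mul (hq : ‖q‖ < 1) (j : ℕ) :
    (qpC q q (j + 1))⁻¹ * (1 - q ^ (j + 1)) = (qpC q q j)⁻¹ := by
  rw [inv_qpC_succ, mul_assoc, inv_mul_cancel₀ (one_sub_pow_ne_zero hq j.succ_ne_zero), mul_one]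

lemma summable_inv_qpC_mul_pow (hq : ‖q‖ < 1) {c : ℂ} (hc : ‖c‖ < 1) :
    Summable fun j => (qpC q q j)⁻¹ * c ^ j := by
  refine summable_of_norm_succ_le_mul hc (u := fun j => (1 - ‖q‖ ^ (j + 1))⁻¹ * ‖c‖) ?_
    fun j => ?_
  · have h := ((tendsto_pow_atTop_nhds_zero_of_lt_one (norm_nonneg q) hq).comp
      (tendsto_add_atTop_nat 1)).const_sub 1
    simpa [Function.comp_def] using (h.inv₀ (by norm_num)).mul_const ‖c‖
  · calc ‖(qpC q q (j + 1))⁻¹ * c ^ (j + 1)‖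
        = ‖1 - q ^ (j + 1)‖⁻¹ * ‖c‖ * ‖(qpC q q j)⁻¹ * c ^ j‖ := by
          simp only [inv_qpC_succ, pow_succ, norm_mul, norm_inv]; ring
      _ ≤ (1 - ‖q‖ ^ (j + 1))⁻¹ * ‖c‖ * ‖(qpC q q j)⁻¹ * c ^ j‖ := by
          gcongr
          · exact sub_pos.mpr (pow_lt_one₀ (norm_nonneg q) hq j.succ_ne_zero)
          · exact one_sub_norm_pow_le_norm_one_sub_pow q _

lemma tsum_inv_qpC_mul_pow_mul_eq (hq : ‖q‖ < 1) {c : ℂ} (hc : ‖c‖ < 1) :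
    ∑' j, (qpC q q j)⁻¹ * (c * q) ^ j = (1 - c) * ∑' j, (qpC q q j)⁻¹ * c ^ j := by
  have hcq : ‖c * q‖ < 1 := by simpa using (norm_mul_pow_le hq c 1).trans_lt hc
  have h := tsum_mul_pow_sub_tsum_mul_pow_mul (summable_inv_qpC_mul_pow hq hc)
    (summable_inv_qpC_mul_pow hq hcq)
  have hshift : ∑' j, (qpC q q j)⁻¹ * c ^ (j + 1) = c * ∑' j, (qpC q q j)⁻¹ * c ^ j := by
    rw [← tsum_mul_left]
    exact tsum_congr fun j => by ring
  simp only [inv_qpC_succ_mul hq, hshift] at h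
  linear_combination -h

theorem qpiC_mul_tsum_inv_qpC_mul_pow (hq : ‖q‖ < 1) {c : ℂ} (hc : ‖c‖ < 1) :
    qpiC q c * ∑' j, (qpC q q j)⁻¹ * c ^ j = 1 := by
  have hG : ∀ m, qpC q c m * ∑' j, (qpC q q j)⁻¹ * c ^ j =
      ∑' j, (qpC q q j)⁻¹ * (c * q ^ m) ^ j := by
    intro m
    induction m with
    | zero => simp [qpC_zero]
    | succ m ih =>
      rw [pow_succ, ← mul_assoc,
        tsum_inv_qpC_mul_pow_mul_eq hq ((norm_mul_pow_le hq c m).trans_lt hc), qpC_succ,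
        mul_right_comm, ih, mul_comm]
  have hlim : Tendsto (fun m => qpC q c m * ∑' j, (qpC q q j)⁻¹ * c ^ j) atTop (𝓝 1) := by
    simp only [hG]
    simpa [Function.comp_def, qpC_zero] using
      (tendsto_tsum_mul_pow_nhds_zero (norm_inv_qpC_le hq)).comp (tendsto_mul_pow_nhds_zero hq c)
  exact tendsto_nhds_unique ((tendsto_qpC hq c).mul_const _) hlim

end Euler

section Convolution

variable {p : ℂ}

lemma norm_pow_mul_inv_qpC_sq_le (hp : ‖p‖ < 1) (j : ℕ) :
    ‖p ^ j * (qpC (p ^ 2) (p ^ 2) j)⁻¹‖ ≤ (1 - ‖p‖)⁻¹ ^ j := by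
  have hsq : ‖p ^ 2‖ ≤ ‖p‖ := by
    rw [norm_pow]; exact pow_le_of_le_one (norm_nonneg p) hp.le two_ne_zero
  rw [norm_mul, norm_pow]
  calc ‖p‖ ^ j * ‖(qpC (p ^ 2) (p ^ 2) j)⁻¹‖ ≤ 1 * (1 - ‖p ^ 2‖)⁻¹ ^ j :=
        mul_le_mul (pow_le_one₀ (norm_nonneg p) hp.le) (norm_inv_qpC_le (norm_pow_two_lt_one hp) j)
          (norm_nonneg _) zero_le_one
    _ ≤ (1 - ‖p‖)⁻¹ ^ j := by
        rw [one_mul]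
        exact pow_le_pow_left₀ (inv_nonneg.mpr (sub_nonneg.mpr (norm_pow_two_lt_one hp).le))
          (inv_anti₀ (sub_pos.mpr hp) (by linarith)) j

theorem sum_antidiagonal_eulerCoeff_mul (hp : ‖p‖ < 1) (k : ℕ) :
    ∑ x ∈ antidiagonal k, eulerCoeff p x.1 * (p ^ x.2 * (qpC (p ^ 2) (p ^ 2) x.2)⁻¹) =
      eulerCoeff (p ^ 2) k := by
  have hp2 := norm_pow_two_lt_one hp
  suffices (fun n => ∑ x ∈ antidiagonal n,
      eulerCoeff p x.1 * (p ^ x.2 * (qpC (p ^ 2) (p ^ 2) x.2)⁻¹)) = eulerCoeff (p ^ 2) from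
    congrFun this k
  have huniq := eq_of_tsum_mul_pow_eventuallyEq (norm_sum_antidiagonal_mul_le
    (norm_eulerCoeff_le_pow hp) (norm_pow_mul_inv_qpC_sq_le hp)) (norm_eulerCoeff_le_pow hp2)
  refine huniq ?_
  filter_upwards [Metric.ball_mem_nhds (0 : ℂ) one_pos] with z hz
  rw [mem_ball_zero_iff] at hz
  have hzp : ‖z * p‖ < 1 := by simpa using (norm_mul_pow_le hp z 1).trans_lt hz
  have hterm : ∀ n, (∑ x ∈ antidiagonal n,
      eulerCoeff p x.1 * (p ^ x.2 * (qpC (p ^ 2) (p ^ 2) x.2)⁻¹)) * z ^ n =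
      ∑ x ∈ antidiagonal n,
        eulerCoeff p x.1 * z ^ x.1 * ((qpC (p ^ 2) (p ^ 2) x.2)⁻¹ * (z * p) ^ x.2) := by
    intro n
    rw [sum_mul]
    refine sum_congr rfl fun x hx => ?_
    rw [← mem_antidiagonal.mp hx]
    ring
  rw [tsum_congr hterm, ← tsum_mul_tsum_eq_tsum_sum_antidiagonal_of_summable_norm
    (summable_eulerCoeff_mul_pow hp z).norm (summable_inv_qpC_mul_pow hp2 hzp).norm,
    ← qpiC_eq_tsum_eulerCoeff_mul_pow hp, qpiC_eq_qpiC_sq_mul hp, mul_assoc,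
    qpiC_mul_tsum_inv_qpC_mul_pow hp2 hzp, mul_one, qpiC_eq_tsum_eulerCoeff_mul_pow hp2]

end Convolution

section Expansion

variable {p : ℂ}

noncomputable def expansionTerm (p w : ℂ) (n j : ℕ) : ℂ :=
  w ^ (n + j) * p ^ ((n + j) ^ 2 + (n + j)) *
    (eulerCoeff p n * (p ^ j * (qpC (p ^ 2) (p ^ 2) j)⁻¹))

lemma mul_eulerCoeff_mul_pow_eq_expansionTerm (p w : ℂ) (n j : ℕ) :
    p ^ (n * (3 * n + 1) / 2) * (-w) ^ n / qpC p p n *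
        (eulerCoeff (p ^ 2) j * (-w * p ^ 2 * p * (p ^ 2) ^ n) ^ j) = expansionTerm p w n j := by
  have hsign : ((-1 : ℂ) ^ j) * (-1) ^ j = 1 := by rw [← mul_pow]; norm_num
  have hexp : (n + j) ^ 2 + (n + j) = n ^ 2 + 2 * n * j + 2 * j.choose 2 + n + 2 * j := by
    linarith [two_mul_choose_two_add j]
  rw [expansionTerm, mul_three_mul_add_one_div_two, hexp]
  -- `ring` cannot use `(-1) ^ j * (-1) ^ j = 1`, so that factor is split off first.
  trans (-1) ^ j * (-1) ^ j * (w ^ (n + j) *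
    p ^ (n ^ 2 + 2 * n * j + 2 * j.choose 2 + n + 2 * j) *
      (eulerCoeff p n * (p ^ j * (qpC (p ^ 2) (p ^ 2) j)⁻¹)))
  · simp only [eulerCoeff, neg_pow w]
    ring
  · rw [hsign, one_mul]

lemma norm_expansionTerm_le (hp : ‖p‖ < 1) (w : ℂ) (n j : ℕ) :
    ‖expansionTerm p w n j‖ ≤
      (((1 - ‖p‖)⁻¹ * ‖w‖) ^ n * ‖p‖ ^ n.choose 2) *
        (((1 - ‖p‖)⁻¹ * ‖w‖) ^ j * ‖p‖ ^ j.choose 2) := by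
  have hexp : n.choose 2 + j.choose 2 ≤ (n + j) ^ 2 + (n + j) := by
    nlinarith [two_mul_choose_two_add n, two_mul_choose_two_add j]
  have hpow : ‖p‖ ^ ((n + j) ^ 2 + (n + j)) ≤ ‖p‖ ^ n.choose 2 * ‖p‖ ^ j.choose 2 := by
    rw [← pow_add]; exact pow_le_pow_of_le_one (norm_nonneg p) hp.le hexp
  rw [expansionTerm, norm_mul, norm_mul, norm_mul, norm_pow, norm_pow]
  calc ‖w‖ ^ (n + j) * ‖p‖ ^ ((n + j) ^ 2 + (n + j)) *
        (‖eulerCoeff p n‖ * ‖p ^ j * (qpC (p ^ 2) (p ^ 2) j)⁻¹‖)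
      ≤ ‖w‖ ^ (n + j) * (‖p‖ ^ n.choose 2 * ‖p‖ ^ j.choose 2) *
        ((1 - ‖p‖)⁻¹ ^ n * (1 - ‖p‖)⁻¹ ^ j) := by
        gcongr
        · exact norm_eulerCoeff_le_pow hp n
        · exact norm_pow_mul_inv_qpC_sq_le hp j
    _ = _ := by ring

lemma summable_expansionTerm (hp : ‖p‖ < 1) (w : ℂ) :
    Summable fun x : ℕ × ℕ => expansionTerm p w x.1 x.2 := by
  have hf := summable_pow_mul_pow_choose_two ((1 - ‖p‖)⁻¹ * ‖w‖) (norm_nonneg p) hp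
  exact (hf.mul_of_nonneg hf (fun _ => by positivity) fun _ => by positivity).of_norm_bounded
    fun x => norm_expansionTerm_le hp w x.1 x.2

lemma sum_antidiagonal_expansionTerm (hp : ‖p‖ < 1) (w : ℂ) (k : ℕ) :
    ∑ x ∈ antidiagonal k, expansionTerm p w x.1 x.2 =
      (p ^ 2) ^ (k ^ 2) * (-w) ^ k / qpC (p ^ 2) (p ^ 2) k := by
  have hterm : ∀ x ∈ antidiagonal k, expansionTerm p w x.1 x.2 = w ^ k * p ^ (k ^ 2 + k) *
      (eulerCoeff p x.1 * (p ^ x.2 * (qpC (p ^ 2) (p ^ 2) x.2)⁻¹)) := fun x hx => by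
    rw [expansionTerm, mem_antidiagonal.mp hx]
  rw [sum_congr rfl hterm, ← mul_sum, sum_antidiagonal_eulerCoeff_mul hp, eulerCoeff,
    neg_pow w, ← pow_mul, ← pow_mul,
    show 2 * k ^ 2 = k ^ 2 + k + 2 * k.choose 2 by linarith [two_mul_choose_two_add k]]
  ring

theorem tsum_eq_qpiC_mul_tsum (hp : ‖p‖ < 1) (w : ℂ)
    (hden : ∀ n, qpC (p ^ 2) (-w * p ^ 2 * p) n ≠ 0) :
    ∑' k : ℕ, (p ^ 2) ^ (k ^ 2) * (-w) ^ k / qpC (p ^ 2) (p ^ 2) k =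
      qpiC (p ^ 2) (-w * p ^ 2 * p) *
        ∑' n : ℕ, p ^ (n * (3 * n + 1) / 2) * (-w) ^ n /
          (qpC p p n * qpC (p ^ 2) (-w * p ^ 2 * p) n) := by
  have hrow : ∀ n, qpiC (p ^ 2) (-w * p ^ 2 * p) * (p ^ (n * (3 * n + 1) / 2) * (-w) ^ n /
      (qpC p p n * qpC (p ^ 2) (-w * p ^ 2 * p) n)) = ∑' j, expansionTerm p w n j := by
    intro n
    rw [qpiC_eq_qpC_mul (norm_pow_two_lt_one hp) _ n,
      qpiC_eq_tsum_eulerCoeff_mul_pow (norm_pow_two_lt_one hp),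
      ← tsum_congr (mul_eulerCoeff_mul_pow_eq_expansionTerm p w n), tsum_mul_left]
    have hQ := hden n
    generalize qpC (p ^ 2) (-w * p ^ 2 * p) n = Q at hQ ⊢
    field_simp
  have hsum := summable_expansionTerm hp w
  rw [← tsum_mul_left, tsum_congr hrow, ← hsum.tsum_prod' hsum.prod_factor,
    hsum.tsum_eq_tsum_sum_antidiagonal, tsum_congr (sum_antidiagonal_expansionTerm hp w)]

end Expansion

theorem Aq_expansion_43 (q : ℝ) (hq0 : 0 < q) (hq1 : q < 1) (w : ℂ)
    (hden : ∀ n : ℕ, qpC (q : ℂ) (-w * (q : ℂ) * (Real.sqrt q : ℂ)) n ≠ 0) :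
    Aq q w =
      qpiC (q : ℂ) (-w * (q : ℂ) * (Real.sqrt q : ℂ)) *
        ∑' n : ℕ, (Real.sqrt q : ℂ) ^ (n * (3 * n + 1) / 2) * (-w) ^ n /
          (qpC (Real.sqrt q : ℂ) (Real.sqrt q : ℂ) n *
            qpC (q : ℂ) (-w * (q : ℂ) * (Real.sqrt q : ℂ)) n) := by
  have hsq : (q : ℂ) = (Real.sqrt q : ℂ) ^ 2 := by
    rw [← Complex.ofReal_pow, Real.sq_sqrt hq0.le]
  have hp : ‖(Real.sqrt q : ℂ)‖ < 1 := by
    rw [Complex.norm_real, Real.norm_of_nonneg (Real.sqrt_nonneg q)]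
    exact (Real.sqrt_lt' one_pos).mpr (by simpa using hq1)
  rw [hsq] at hden
  rw [Aq, hsq]
  exact tsum_eq_qpiC_mul_tsum hp w hden
end

section
/- For 0 < q < 1 and every nonnegative integer n, S_n(-q^{-n+1/2}; q) = q^{-(n²-n)/4}/(q^{1/2};q^{1/2})_n and S_n(-q^{-n-1/2}; q) = q^{-(n²+n)/4}/(q^{1/2};q^{1/2})_n, where S_n(x;q) = ∑_{k=0}^n q^{k²}(-x)^k/((q;q)_k (q;q)_{n-k}). -/
noncomputable def qp (q a : ℝ) (n : ℕ) : ℝ := ∏ k ∈ Finset.range n, (1 - a * q ^ k)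

noncomputable def SW (q x : ℝ) (n : ℕ) : ℝ :=
  ∑ k ∈ Finset.range (n + 1), q ^ (k ^ 2) * (-x) ^ k / (qp q q k * qp q q (n - k))

/-! With `p = √q` and `q = p²`, expanding `S_n` through the Gaussian binomials `[n, k]_q` gives
`(q;q)_n S_n(x;q) = ∑ₖ [n, k]_q q^{k²} (-x)^k`, and at the points `x = -p^{e-2n}` (`e = ±1`) the
right side becomes `G_n(e) = ∑ₖ [n, k]_{p²} p^{2k² - 2nk + ek}`. The `q`-Pascal rule gives
`G_{n+1}(1) = G_n(-1) + p G_n(1)` and the symmetry `k ↦ n - k` gives `G_n(1) = pⁿ G_n(-1)`, so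
`p^{n+1} G_{n+1}(-1) = (1 + p^{n+1}) G_n(-1)`, i.e. `G_n(-1) = p^{-n(n+1)/2} (-p;p)_n`. Finally
`(p²;p²)_n = (p;p)_n (-p;p)_n`. -/

open Finset

lemma qp_zero (q a : ℝ) : qp q a 0 = 1 := prod_range_zero _

lemma qp_succ (q a : ℝ) (n : ℕ) : qp q a (n + 1) = qp q a n * (1 - a * q ^ n) :=
  prod_range_succ _ _

lemma qp_self_succ (q : ℝ) (n : ℕ) : qp q q (n + 1) = qp q q n * (1 - q ^ (n + 1)) := by
  rw [qp_succ, pow_succ']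

lemma qp_pos {q : ℝ} (h0 : 0 ≤ q) (h1 : q < 1) (n : ℕ) : 0 < qp q q n :=
  prod_pos fun k _ => by
    rw [← pow_succ']
    exact sub_pos.2 (pow_lt_one₀ h0 h1 k.succ_ne_zero)

lemma qp_sq_eq_mul (p : ℝ) (n : ℕ) : qp (p ^ 2) (p ^ 2) n = qp p p n * qp p (-p) n := by
  rw [qp, qp, qp, ← prod_mul_distrib]
  refine prod_congr rfl fun k _ => ?_
  rw [← pow_mul, mul_comm 2 k, pow_mul']
  ring

noncomputable def qBinom (q : ℝ) : ℕ → ℕ → ℝ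
  | _, 0 => 1
  | 0, _ + 1 => 0
  | n + 1, k + 1 => qBinom q n (k + 1) + q ^ (n - k) * qBinom q n k

lemma qBinom_zero_right (q : ℝ) (n : ℕ) : qBinom q n 0 = 1 := by cases n <;> rfl

lemma qBinom_succ_succ (q : ℝ) (n k : ℕ) :
    qBinom q (n + 1) (k + 1) = qBinom q n (k + 1) + q ^ (n - k) * qBinom q n k := rfl

lemma qBinom_eq_zero_of_lt (q : ℝ) : ∀ {n k : ℕ}, n < k → qBinom q n k = 0
  | 0, _ + 1, _ => rfl
  | n + 1, k + 1, h => by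
    rw [qBinom_succ_succ, qBinom_eq_zero_of_lt q (by omega), qBinom_eq_zero_of_lt q (by omega)]
    ring

lemma qBinom_mul_qp (q : ℝ) :
    ∀ {n k : ℕ}, k ≤ n → qBinom q n k * (qp q q k * qp q q (n - k)) = qp q q n
  | n, 0, _ => by simp [qBinom_zero_right, qp_zero]
  | n + 1, j + 1, h => by
    have hj : j ≤ n := by omega
    -- for `j = n` both sides vanish, since `1 - q ^ 0 = 0`
    have high : qBinom q n (j + 1) * (qp q q (j + 1) * qp q q (n - j)) =
        qp q q n * (1 - q ^ (n - j)) := by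
      rcases hj.lt_or_eq with hlt | rfl
      · obtain ⟨m, rfl⟩ : ∃ m, n = j + 1 + m := ⟨n - (j + 1), by omega⟩
        have ih := qBinom_mul_qp q (n := j + 1 + m) (k := j + 1) (by omega)
        rw [show j + 1 + m - (j + 1) = m by omega] at ih
        rw [show j + 1 + m - j = m + 1 by omega, qp_self_succ q m]
        linear_combination (1 - q ^ (m + 1)) * ih
      · simp [qBinom_eq_zero_of_lt]
    have low := qBinom_mul_qp q hj
    have hpow : q ^ (n - j) * q ^ (j + 1) = q ^ (n + 1) := by
      rw [← pow_add]; congr 1; omega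
    rw [qp_self_succ q j] at high
    rw [qBinom_succ_succ, Nat.add_sub_add_right, qp_self_succ q j, qp_self_succ q n]
    linear_combination high + q ^ (n - j) * (1 - q ^ (j + 1)) * low - qp q q n * hpow

lemma qBinom_eq_div {q : ℝ} (h0 : 0 ≤ q) (h1 : q < 1) {n k : ℕ} (hk : k ≤ n) :
    qBinom q n k = qp q q n / (qp q q k * qp q q (n - k)) :=
  eq_div_of_mul_eq (mul_pos (qp_pos h0 h1 k) (qp_pos h0 h1 _)).ne' (qBinom_mul_qp q hk)

lemma qBinom_symm {q : ℝ} (h0 : 0 ≤ q) (h1 : q < 1) {n k : ℕ} (hk : k ≤ n) :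
    qBinom q n (n - k) = qBinom q n k := by
  rw [qBinom_eq_div h0 h1 (Nat.sub_le n k), qBinom_eq_div h0 h1 hk, Nat.sub_sub_self hk,
    mul_comm]

lemma SW_eq_sum_qBinom {q : ℝ} (h0 : 0 ≤ q) (h1 : q < 1) (x : ℝ) (n : ℕ) :
    SW q x n = (∑ k ∈ range (n + 1), qBinom q n k * (q ^ (k ^ 2) * (-x) ^ k)) / qp q q n := by
  rw [SW, sum_div]
  refine sum_congr rfl fun k hk => ?_
  have hn : qp q q n ≠ 0 := (qp_pos h0 h1 n).ne'
  rw [qBinom_eq_div h0 h1 (Nat.lt_succ_iff.1 (mem_range.1 hk))]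
  field_simp

noncomputable def qBinomQuadSum (p : ℝ) (n : ℕ) (e : ℤ) : ℝ :=
  ∑ k ∈ range (n + 1), qBinom (p ^ 2) n k * p ^ (2 * (k : ℤ) ^ 2 - 2 * n * k + e * k)

lemma SW_sq_neg_zpow {p : ℝ} (hp : p ≠ 0) (hp1 : p ^ 2 < 1) (n : ℕ) (e : ℤ) :
    SW (p ^ 2) (-p ^ (e - 2 * n)) n = qBinomQuadSum p n e / qp (p ^ 2) (p ^ 2) n := by
  rw [SW_eq_sum_qBinom (sq_nonneg p) hp1, qBinomQuadSum]
  congr 1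
  refine sum_congr rfl fun k _ => ?_
  rw [neg_neg, ← zpow_natCast (p ^ 2), ← zpow_natCast (p ^ (e - 2 * n)), ← zpow_natCast p 2,
    ← zpow_mul, ← zpow_mul, ← zpow_add₀ hp]
  congr 2
  push_cast
  ring

lemma qBinomQuadSum_succ {p : ℝ} (hp : p ≠ 0) (n : ℕ) (e : ℤ) :
    qBinomQuadSum p (n + 1) e = qBinomQuadSum p n (e - 2) + p ^ e * qBinomQuadSum p n e := by
  have hlow : qBinomQuadSum p n (e - 2) = ∑ k ∈ range (n + 2), qBinom (p ^ 2) n k *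
      p ^ (2 * (k : ℤ) ^ 2 - 2 * ((n + 1 : ℕ) : ℤ) * k + e * k) := by
    rw [qBinomQuadSum, sum_range_succ _ (n + 1), qBinom_eq_zero_of_lt _ (Nat.lt_succ_self n),
      zero_mul, add_zero]
    refine sum_congr rfl fun k _ => ?_
    congr 2
    push_cast
    ring
  have hz : ∀ k ∈ range (n + 1), (p ^ 2) ^ (n - k) *
      p ^ (2 * ((k + 1 : ℕ) : ℤ) ^ 2 - 2 * ((n + 1 : ℕ) : ℤ) * (k + 1 : ℕ) + e * (k + 1 : ℕ)) =
      p ^ e * p ^ (2 * (k : ℤ) ^ 2 - 2 * n * k + e * k) := by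
    intro k hk
    rw [← pow_mul, ← zpow_natCast, ← zpow_add₀ hp, ← zpow_add₀ hp]
    congr 1
    push_cast [Nat.cast_sub (Nat.lt_succ_iff.1 (mem_range.1 hk))]
    ring
  rw [hlow, qBinomQuadSum, qBinomQuadSum, mul_sum, sum_range_succ' _ (n + 1),
    sum_range_succ' _ (n + 1)]
  simp only [qBinom_succ_succ, qBinom_zero_right, add_mul, sum_add_distrib]
  rw [add_right_comm]
  congr 1
  refine sum_congr rfl fun k hk => ?_
  linear_combination qBinom (p ^ 2) n k * hz k hk

lemma qBinomQuadSum_reflect {p : ℝ} (hp : p ≠ 0) (hp1 : p ^ 2 < 1) (n : ℕ) (e : ℤ) :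
    qBinomQuadSum p n e = p ^ (e * n) * qBinomQuadSum p n (-e) := by
  rw [qBinomQuadSum, qBinomQuadSum, mul_sum, ← sum_range_reflect]
  refine sum_congr rfl fun k hk => ?_
  have hk : k ≤ n := Nat.lt_succ_iff.1 (mem_range.1 hk)
  rw [Nat.add_sub_cancel, qBinom_symm (sq_nonneg p) hp1 hk, mul_left_comm, ← zpow_add₀ hp]
  congr 2
  push_cast [Nat.cast_sub hk]
  ring

lemma qBinomQuadSum_neg_one {p : ℝ} (hp : p ≠ 0) (hp1 : p ^ 2 < 1) (n : ℕ) :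
    qBinomQuadSum p n (-1) = qp p (-p) n / p ^ (n * (n + 1) / 2) := by
  induction n with
  | zero => simp [qBinomQuadSum, qBinom_zero_right, qp_zero]
  | succ n ih =>
    have hrefl (m : ℕ) : qBinomQuadSum p m 1 = p ^ m * qBinomQuadSum p m (-1) := by
      simpa using qBinomQuadSum_reflect hp hp1 m 1
    have hsucc : qBinomQuadSum p (n + 1) 1 =
        qBinomQuadSum p n (-1) + p * qBinomQuadSum p n 1 := by
      simpa using qBinomQuadSum_succ hp n 1
    have step : p ^ (n + 1) * qBinomQuadSum p (n + 1) (-1) =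
        (1 + p ^ (n + 1)) * qBinomQuadSum p n (-1) := by
      rw [← hrefl, hsucc, hrefl]
      ring
    have htri : (n + 1) * (n + 1 + 1) / 2 = n * (n + 1) / 2 + (n + 1) := by
      simpa [mul_comm] using Nat.triangle_succ (n + 1)
    have hT : p ^ (n * (n + 1) / 2) ≠ 0 := pow_ne_zero _ hp
    rw [ih, ← mul_div_assoc, eq_div_iff hT] at step
    rw [htri, pow_add, qp_succ, eq_div_iff (mul_ne_zero hT (pow_ne_zero _ hp))]
    linear_combination step

theorem SW_half_integer_values (q : ℝ) (hq0 : 0 < q) (hq1 : q < 1) (n : ℕ) :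
    SW q (-(Real.sqrt q * q ^ (-(n : ℤ)))) n =
      ((Real.sqrt q) ^ (n * (n - 1) / 2))⁻¹ / qp (Real.sqrt q) (Real.sqrt q) n ∧
    SW q (-(q ^ (-(n : ℤ)) / Real.sqrt q)) n =
      ((Real.sqrt q) ^ (n * (n + 1) / 2))⁻¹ / qp (Real.sqrt q) (Real.sqrt q) n := by
  set p := Real.sqrt q
  have hp : p ≠ 0 := (Real.sqrt_pos.2 hq0).ne'
  have hq : q = p ^ 2 := (Real.sq_sqrt hq0.le).symm
  have hp1 : p ^ 2 < 1 := hq ▸ hq1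
  obtain ⟨hpp, hpm⟩ : qp p p n ≠ 0 ∧ qp p (-p) n ≠ 0 :=
    mul_ne_zero_iff.1 (qp_sq_eq_mul p n ▸ (qp_pos (sq_nonneg p) hp1 n).ne')
  have hx₁ : p * (p ^ 2) ^ (-(n : ℤ)) = p ^ (1 - 2 * (n : ℤ)) := by
    rw [← zpow_natCast p 2, ← zpow_mul, ← zpow_one_add₀ hp]; ring_nf
  have hx₂ : (p ^ 2) ^ (-(n : ℤ)) / p = p ^ (-1 - 2 * (n : ℤ)) := by
    rw [div_eq_mul_inv, ← zpow_natCast p 2, ← zpow_mul, ← zpow_sub_one₀ hp]; ring_nf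
  have htri : n * (n + 1) / 2 = n * (n - 1) / 2 + n := by
    simpa [mul_comm] using Nat.triangle_succ n
  rw [hq, hx₁, hx₂, SW_sq_neg_zpow hp hp1, SW_sq_neg_zpow hp hp1,
    qBinomQuadSum_reflect hp hp1 n 1, one_mul, zpow_natCast, qBinomQuadSum_neg_one hp hp1,
    qp_sq_eq_mul, htri, pow_add]
  constructor <;> field_simp
end
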